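/- Let D be an invertible diagonal n×n complex matrix with D_{ii}D_{jj}⁻¹ ≠ 1 for i ≠ j, C unipotent upper (or lower) triangular, and T the unique unipotent triangular matrix of the same type with T⁻¹(CD)T = D. Fix a partition of {1,...,n} into consecutive blocks. Then C vanishes at every entry (i,j) with i and j in different blocks if and only if T vanishes at every such entry. In other words, C is block diagonal with respect to the partition if and only if T is. -/

import Mathlib

/-!
From `T⁻¹ (C D) T = D` one gets `(C D) T = T D` and `C (D T) = T D`. Read entrywise and
combined with triangularity, these express each off-block entry of `T` (resp. `C`) through
off-block entries lower in its column (resp. further left in its row), with the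
factor `d i - d j` (resp. `d j`), which is nonzero by nonresonance (resp. invertibility of `D`).
So vanishing of the off-block part propagates by induction in either direction.
-/

open Matrix

/-- A matrix is unipotent upper triangular if it is upper triangular with all
diagonal entries equal to `1`. -/
def IsUnipotentUpper {n : ℕ} (T : Matrix (Fin n) (Fin n) ℂ) : Prop :=
  (∀ i j : Fin n, j < i → T i j = 0) ∧ (∀ i : Fin n, T i i = 1)

namespace Matrix

variable {ι R α : Type*} [Fintype ι] {blk : ι → α}

def IsBlockDiagonal [Zero R] (blk : ι → α) (M : Matrix ι ι R) : Prop :=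
  ∀ i j, blk i ≠ blk j → M i j = 0

section Semiring

variable [NonUnitalNonAssocSemiring R]

theorem IsBlockDiagonal.mul_diagonal [DecidableEq ι] {M : Matrix ι ι R}
    (hM : M.IsBlockDiagonal blk) (d : ι → R) : (M * diagonal d).IsBlockDiagonal blk :=
  fun i j hij => by rw [Matrix.mul_diagonal, hM i j hij, zero_mul]

theorem IsBlockDiagonal.diagonal_mul [DecidableEq ι] {M : Matrix ι ι R}
    (hM : M.IsBlockDiagonal blk) (d : ι → R) : (diagonal d * M).IsBlockDiagonal blk :=
  fun i j hij => by rw [Matrix.diagonal_mul, hM i j hij, mul_zero]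

/-- Ascending induction on the column `j`: off-block, the `(i, j)` entry of `A N` reduces to
`A i j * N j j`. -/
theorem IsBlockDiagonal.of_mul_left [LinearOrder ι] [NoZeroDivisors R] {A N : Matrix ι ι R}
    (hN : N.IsUpperTriangular) (hNd : ∀ i, N i i ≠ 0) (hNblk : N.IsBlockDiagonal blk)
    (hANblk : (A * N).IsBlockDiagonal blk) : A.IsBlockDiagonal blk := by
  intro i j
  induction j using WellFoundedLT.induction with
  | _ j ih =>
    intro hij
    have hcol : ∑ k, A i k * N k j = A i j * N j j := by
      refine Finset.sum_eq_single j (fun k _ hkj => ?_) (by simp)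
      rcases hkj.lt_or_gt with hkj | hjk
      · by_cases hblk : blk k = blk j
        · rw [ih k hkj (hblk ▸ hij), zero_mul]
        · rw [hNblk k j hblk, mul_zero]
      · rw [hN hjk, mul_zero]
    have hentry := hANblk i j hij
    rw [mul_apply, hcol] at hentry
    exact (mul_eq_zero.mp hentry).resolve_right (hNd j)

end Semiring

/-- Descending induction on the row `i`: off-block, the `(i, j)` entry of `M X = X D` reduces to
`M i i * X i j = X i j * d j`. -/
theorem IsBlockDiagonal.of_mul_eq_mul_diagonal [CommRing R] [NoZeroDivisors R] [LinearOrder ι]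
    [DecidableEq ι] {M X : Matrix ι ι R} {d : ι → R} (hM : M.IsUpperTriangular)
    (hMd : ∀ i, M i i = d i) (hd : Function.Injective d) (hMblk : M.IsBlockDiagonal blk)
    (h : M * X = X * diagonal d) : X.IsBlockDiagonal blk := by
  intro i j
  induction i using WellFoundedGT.induction with
  | _ i ih =>
    intro hij
    have hrow : ∑ k, M i k * X k j = M i i * X i j := by
      refine Finset.sum_eq_single i (fun k _ hki => ?_) (by simp)
      rcases hki.lt_or_gt with hki | hik
      · rw [hM hki, zero_mul]
      · by_cases hblk : blk i = blk k
        · rw [ih k hik (hblk ▸ hij), mul_zero]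
        · rw [hMblk i k hblk, zero_mul]
    have hentry := congrFun (congrFun h i) j
    rw [mul_apply, Matrix.mul_diagonal, hrow, hMd] at hentry
    have hdij : d i - d j ≠ 0 := sub_ne_zero.mpr (hd.ne fun hdij => hij (congrArg blk hdij))
    have hXij : X i j * (d i - d j) = 0 := by linear_combination hentry
    exact (mul_eq_zero.mp hXij).resolve_right hdij

end Matrix

theorem IsUnipotentUpper.isUpperTriangular {n : ℕ} {T : Matrix (Fin n) (Fin n) ℂ}
    (hT : IsUnipotentUpper T) : T.IsUpperTriangular :=
  fun i j h => hT.1 i j h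

theorem IsUnipotentUpper.isUnit_det {n : ℕ} {T : Matrix (Fin n) (Fin n) ℂ}
    (hT : IsUnipotentUpper T) : IsUnit T.det := by
  simp [det_of_isUpperTriangular hT.isUpperTriangular, hT.2]

theorem block_diagonal_correspondence_general
    {n : ℕ} (d : Fin n → ℂ) (hd : ∀ i, d i ≠ 0)
    (hres : ∀ i j : Fin n, i ≠ j → d i * (d j)⁻¹ ≠ 1)
    (C T : Matrix (Fin n) (Fin n) ℂ)
    (hC : IsUnipotentUpper C) (hT : IsUnipotentUpper T)
    (hconj : T⁻¹ * (C * Matrix.diagonal d) * T = Matrix.diagonal d)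
    (blk : Fin n → ℕ) :
    ((∀ i j : Fin n, blk i ≠ blk j → C i j = 0) ↔
      (∀ i j : Fin n, blk i ≠ blk j → T i j = 0)) := by
  have hdinj : Function.Injective d := fun i j hij => by
    by_contra hne
    exact hres i j hne (by rw [hij, mul_inv_cancel₀ (hd j)])
  have hkey : C * diagonal d * T = T * diagonal d := by
    simpa [← Matrix.mul_assoc, mul_nonsing_inv T hT.isUnit_det] using congrArg (T * ·) hconj
  refine ⟨fun (hCblk : C.IsBlockDiagonal blk) => ?_,
    fun (hTblk : T.IsBlockDiagonal blk) => ?_⟩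
  · exact IsBlockDiagonal.of_mul_eq_mul_diagonal
      (hC.isUpperTriangular.mul (blockTriangular_diagonal d)) (by simp [hC.2]) hdinj
      (hCblk.mul_diagonal d) hkey
  · refine IsBlockDiagonal.of_mul_left ((blockTriangular_diagonal d).mul hT.isUpperTriangular)
      (by simp [hT.2, hd]) (hTblk.diagonal_mul d) ?_
    rw [← Matrix.mul_assoc, hkey]
    exact hTblk.mul_diagonal d

/-- Block-diagonal structure correspondence: let the partition of `{1,…,n}` into
consecutive blocks be encoded by a monotone block-label function `blk`, two
indices lying in the same block iff their labels agree. If `T⁻¹(CD)T = D` with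
`C`, `T` unipotent upper triangular and `D = diagonal d` nonresonant, then `C`
vanishes at every entry `(i,j)` with `i`, `j` in different blocks iff `T` does;
i.e. `C` is block diagonal with respect to the partition iff `T` is. -/
theorem block_diagonal_correspondence
    {n : ℕ} (d : Fin n → ℂ) (hd : ∀ i, d i ≠ 0)
    (hres : ∀ i j : Fin n, i ≠ j → d i * (d j)⁻¹ ≠ 1)
    (C T : Matrix (Fin n) (Fin n) ℂ)
    (hC : IsUnipotentUpper C) (hT : IsUnipotentUpper T)
    (hconj : T⁻¹ * (C * Matrix.diagonal d) * T = Matrix.diagonal d)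
    (blk : Fin n → ℕ) (hblk : Monotone blk) :
    ((∀ i j : Fin n, blk i ≠ blk j → C i j = 0) ↔
      (∀ i j : Fin n, blk i ≠ blk j → T i j = 0)) :=
  block_diagonal_correspondence_general d hd hres C T hC hT hconj blk
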